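/- In the abstract slot-and-acquisition dynamics of the Handoff Counter mechanism, any token identified by a quadruple (s, d, sck, dck) is acquired at most once: at most one step of any execution acquires a token with identifier (s, d, sck, dck). -/
import Mathlib


/-- The part of a Handoff Counter node state relevant to slot-and-acquisition
dynamics at a destination node `d`: its destination clock and its map of slots
(a slot `(s, d, sck, dck)` exists when `slots s = some (sck, dck)`). -/
structure SlotState (ι : Type) where
  dck : ℕ
  slots : ι → Option (ℕ × ℕ)

/-- A step of the abstract dynamics at node `d`: either leave `(dck, slots)`
unchanged, remove entries from `slots` (this includes acquisition steps, which
remove the slot matching the acquired token), or create a slot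
`s ↦ (sck, dck)` for a source `s` not in the domain of `slots`, using the
current destination clock and incrementing it. -/
inductive SlotStep {ι : Type} [DecidableEq ι] : SlotState ι → SlotState ι → Prop
  | skip (st : SlotState ι) : SlotStep st st
  | remove (st : SlotState ι) (slots' : ι → Option (ℕ × ℕ))
      (h : ∀ s, slots' s = st.slots s ∨ slots' s = none) :
      SlotStep st ⟨st.dck, slots'⟩
  | create (st : SlotState ι) (s : ι) (sck : ℕ) (h : st.slots s = none) :
      SlotStep st ⟨st.dck + 1, Function.update st.slots s (some (sck, st.dck))⟩

/-- An execution of the dynamics at node `d`: initially the destination clock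
is `0` and there are no slots, and consecutive states are related by steps. -/
def SlotExec {ι : Type} [DecidableEq ι] (st : ℕ → SlotState ι) : Prop :=
  (st 0).dck = 0 ∧ (∀ s, (st 0).slots s = none) ∧
    ∀ n, SlotStep (st n) (st (n + 1))

/-- Step `n` acquires the token identified by `(s, d, sck, dck)`: it occurs
while `slots_d` contains the entry `s ↦ (sck, dck)` and removes this entry. -/
def AcquiresToken {ι : Type} (st : ℕ → SlotState ι) (s : ι) (sck dck : ℕ)
    (n : ℕ) : Prop :=
  (st n).slots s = some (sck, dck) ∧ (st (n + 1)).slots s ≠ some (sck, dck)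

lemma slotStep_dck_mono {ι : Type} [DecidableEq ι] {a b : SlotState ι}
    (h : SlotStep a b) : a.dck ≤ b.dck := by
  cases h <;> simp

lemma dck_mono {ι : Type} [DecidableEq ι] {st : ℕ → SlotState ι}
    (hexec : SlotExec st) {a b : ℕ} (hab : a ≤ b) :
    (st a).dck ≤ (st b).dck := by
  induction b with
  | zero =>
    have : a = 0 := Nat.le_zero.mp hab
    subst this; exact le_rfl
  | succ b ih =>
    rcases Nat.lt_or_ge a (b + 1) with h | h
    · exact le_trans (ih (by omega)) (slotStep_dck_mono (hexec.2.2 b))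
    · have : a = b + 1 := by omega
      subst this; exact le_rfl

lemma slot_dck_lt {ι : Type} [DecidableEq ι] {st : ℕ → SlotState ι}
    (hexec : SlotExec st) (n : ℕ) :
    ∀ s a b, (st n).slots s = some (a, b) → b < (st n).dck := by
  induction n with
  | zero => intro s a b h; rw [hexec.2.1 s] at h; exact absurd h (by simp)
  | succ n ih =>
    intro s a b hb
    have hdck := slotStep_dck_mono (hexec.2.2 n)
    have hstep := hexec.2.2 n
    obtain ⟨B, hB⟩ : ∃ B, st (n + 1) = B := ⟨_, rfl⟩
    rw [hB] at hb hstep ⊢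
    cases hstep with
    | skip => exact ih s a b hb
    | remove slots' h =>
      rcases h s with h1 | h1
      · simp only [h1] at hb
        exact ih s a b hb
      · simp [h1] at hb
    | create s' sck' h =>
      dsimp only at hb ⊢
      by_cases hs : s = s'
      · subst hs
        simp only [Function.update_self] at hb
        simp only [Option.some.injEq, Prod.mk.injEq] at hb
        simp [← hb.2]
      · rw [Function.update_of_ne hs] at hb
        have := ih s a b hb
        simp; omega

/-- Any token identified by a quadruple `(s, d, sck, dck)` is acquired at most
once: at most one step of any execution acquires a token with that identifier.
(Node identifiers are globally unique, so it suffices to consider the dynamics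
at the single destination node `d`.) -/
theorem token_acquired_at_most_once {ι : Type} [DecidableEq ι]
    (st : ℕ → SlotState ι) (hexec : SlotExec st)
    (s : ι) (sck dck : ℕ) (m n : ℕ)
    (hm : AcquiresToken st s sck dck m) (hn : AcquiresToken st s sck dck n) :
    m = n := by
  have key : ∀ m n, AcquiresToken st s sck dck m → AcquiresToken st s sck dck n →
      m < n → False := by
    intro m n hm hn hmn
    have habsent : ∀ k, m + 1 ≤ k → (st k).slots s ≠ some (sck, dck) := by
      intro k hk
      induction k with
      | zero => omega
      | succ k ih =>
        rcases Nat.lt_or_ge (m + 1) (k + 1) with h | h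
        · have hk' : m + 1 ≤ k := by omega
          have ihk := ih hk'
          intro hbad
          have hstep := hexec.2.2 k
          obtain ⟨B, hB⟩ : ∃ B, st (k + 1) = B := ⟨_, rfl⟩
          rw [hB] at hbad hstep
          cases hstep with
          | skip => exact ihk hbad
          | remove slots' h2 =>
            dsimp only at hbad
            rcases h2 s with h1 | h1
            · rw [h1] at hbad; exact ihk hbad
            · simp [h1] at hbad
          | create s' sck' h2 =>
            dsimp only at hbad
            by_cases hs : s = s'
            · subst hs
              simp only [Function.update_self, Option.some.injEq,
                Prod.mk.injEq] at hbad
              have h3 : dck < (st m).dck :=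
                slot_dck_lt hexec m s sck dck hm.1
              have h4 : (st m).dck ≤ (st k).dck := dck_mono hexec (by omega)
              omega
            · rw [Function.update_of_ne hs] at hbad; exact ihk hbad
        · have : m + 1 = k + 1 := by omega
          rw [← this]
          exact hm.2
    exact habsent n (by omega) hn.1
  rcases lt_trichotomy m n with h | h | h
  · exact absurd (key m n hm hn h) (by simp)
  · exact h
  · exact absurd (key n m hn hm h) (by simp)
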